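/- arXiv:2207.01224 — 2 statements merged into one kernel-verified Lean document; each statement's English description precedes it below -/
import Mathlib

section
/- Let (G,u) be a rooted connected locally finite graph, d ∈ ℕ, and ζ_t = 1{X_t(u) = X_{t+d}(u)}. Then for all t, s, τ ∈ ℕ, |Var(ζ_{t+1} + … + ζ_{t+s}) − Var(ζ_{t+τ+1} + … + ζ_{t+s+τ})| ≤ 8(s/ε)(1−ε)^t. -/
open Filter Topology MeasureTheory.Measure
open scoped ENNReal Classical

noncomputable section

namespace NVMPaper

/-- A model of the discrete-time noisy voter model with noise `ε` on the graph `G`.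
`Z t v = (ξ, Y, η)` is the driving randomness used by vertex `v` at time `t`:
`ξ` is the fresh-opinion indicator (probability `ε`), `Y` a fresh `Bernoulli(1/2)`
opinion and `η` a uniformly chosen neighbor of `v`; all of these variables
(over all `t` and `v`) are independent.  The initial opinion of `v` is `Y 0 v`. -/
structure NVM {V : Type} (G : SimpleGraph V) (ε : ℝ) where
  space : Type
  [msp : MeasurableSpace space]
  P : MeasureTheory.Measure space
  isProb : MeasureTheory.IsProbabilityMeasure P
  Z : ℕ → V → space → Bool × Bool × V
  meas : ∀ t v b₁ b₂ w, MeasurableSet {ω | Z t v ω = (b₁, b₂, w)}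
  indep : ∀ (F : Finset (ℕ × V)) (a : ℕ × V → Bool × Bool × V),
    P {ω | ∀ p ∈ F, Z p.1 p.2 ω = a p} = ∏ p ∈ F, P {ω | Z p.1 p.2 ω = a p}
  dist : ∀ (t : ℕ) (v : V) (b₁ b₂ : Bool) (w : V),
    P {ω | Z t v ω = (b₁, b₂, w)} =
      (if b₁ then ENNReal.ofReal ε else ENNReal.ofReal (1 - ε)) * (1 / 2) *
        (if w ∈ G.neighborSet v then ((Nat.card (G.neighborSet v) : ℝ≥0∞))⁻¹ else 0)

attribute [instance] NVM.msp

namespace NVM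

variable {V : Type} {G : SimpleGraph V} {ε : ℝ}

/-- `ξ_t(v)`, the fresh-opinion indicator. -/
def xi (M : NVM G ε) (t : ℕ) (v : V) (ω : M.space) : Bool := (M.Z t v ω).1

/-- `Y_t(v)`, the fresh opinion. -/
def fresh (M : NVM G ε) (t : ℕ) (v : V) (ω : M.space) : Bool := (M.Z t v ω).2.1

/-- `η_t(v)`, the uniformly chosen neighbor. -/
def eta (M : NVM G ε) (t : ℕ) (v : V) (ω : M.space) : V := (M.Z t v ω).2.2

/-- The opinion process `X_t(v)` of the noisy voter model. -/
def X (M : NVM G ε) : ℕ → V → M.space → Bool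
  | 0, v, ω => M.fresh 0 v ω
  | t + 1, v, ω =>
      if M.xi (t + 1) v ω then M.fresh (t + 1) v ω else X M t (M.eta (t + 1) v ω) ω

/-- The real-valued observation of the process at the root `u`. -/
def obs (M : NVM G ε) (u : V) (t : ℕ) (ω : M.space) : ℝ := if M.X t u ω then 1 else 0

/-- Position (at time `t - k`) of the backward path `π_t` of the digraph `𝒟_G`
started at `(u, t)`, after `k` backward steps; `none` if the path terminated. -/
def pathPos (M : NVM G ε) (u : V) (t : ℕ) : ℕ → M.space → Option V
  | 0, _ => some u
  | k + 1, ω =>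
      if k + 1 ≤ t then
        match pathPos M u t k ω with
        | none => none
        | some v => if M.xi (t - k) v ω then none else some (M.eta (t - k) v ω)
      else none

/-- The event that the paths `π_t` and `π_{t+d}` share a vertex. -/
def meetEvent (M : NVM G ε) (u : V) (t d : ℕ) : Set M.space :=
  {ω | ∃ k ≤ t, ∃ v : V,
      pathPos M u t k ω = some v ∧ pathPos M u (t + d) (k + d) ω = some v}

/-- `p_{t;d}(G,u)`, the probability that `π_t` meets `π_{t+d}`. -/
def ptd (M : NVM G ε) (u : V) (t d : ℕ) : ℝ := (M.P (M.meetEvent u t d)).toReal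

/-- `p_d(G,u)`, the limit of the nondecreasing bounded sequence `t ↦ p_{t;d}(G,u)`. -/
def pd (M : NVM G ε) (u : V) (d : ℕ) : ℝ := ⨆ t, M.ptd u t d

/-- `ζ_t = 1{X_t(u) = X_{t+d}(u)}`. -/
def zeta (M : NVM G ε) (u : V) (d t : ℕ) (ω : M.space) : ℝ :=
  if M.X t u ω = M.X (t + d) u ω then 1 else 0

end NVM

open Fin.NatCast in
/-- The statistic `S_t^{(d)}`, as a function of the observations `X_0, …, X_t`. -/
def Sstat (d t : ℕ) (x : Fin (t + 1) → ℝ) : ℝ :=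
  (1 / ((t - d : ℕ) : ℝ)) *
    ∑ i ∈ Finset.Icc 1 (t - d), (if x i = x (i + d) then (1 : ℝ) else 0)

open Fin.NatCast in
/-- The statistic `S_t^{(d₁,d₂,d₃)}`, counting 4-tuples of equal opinions. -/
def Sstat3 (d₁ d₂ d₃ t : ℕ) (x : Fin (t + 1) → ℝ) : ℝ :=
  (1 / ((t - d₃ : ℕ) : ℝ)) *
    ∑ i ∈ Finset.Icc 1 (t - d₃),
      (if x i = x (i + d₁) ∧ x i = x (i + d₂) ∧ x i = x (i + d₃) then (1 : ℝ) else 0)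

/-- The random variable `S_t^{(d)}` evaluated on the observations of the model. -/
def Sobs {V : Type} {G : SimpleGraph V} {ε : ℝ} (M : NVM G ε) (u : V) (d t : ℕ)
    (ω : M.space) : ℝ :=
  Sstat d t fun i => M.obs u i ω

/-- `(G₁,u₁)` and `(G₂,u₂)` are distinguishable by the sequence of statistics `S`
(where `S t` may use the observations `X_0, …, X_t`). -/
def DistinguishableBy {V₁ V₂ : Type} {G₁ : SimpleGraph V₁} {G₂ : SimpleGraph V₂} {ε : ℝ}
    (M₁ : NVM G₁ ε) (u₁ : V₁) (M₂ : NVM G₂ ε) (u₂ : V₂)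
    (S : (t : ℕ) → (Fin (t + 1) → ℝ) → ℝ) : Prop :=
  ∃ A B : ℕ → Set ℝ, (∀ t, Disjoint (A t) (B t)) ∧
    Tendsto
      (fun t => (M₁.P.prod M₂.P)
        {ω : M₁.space × M₂.space |
          S t (fun i => M₁.obs u₁ i ω.1) ∈ A t ∧ S t (fun i => M₂.obs u₂ i ω.2) ∈ B t})
      atTop (𝓝 1)

/-- `(G₁,u₁)` and `(G₂,u₂)` are NVM-distinguishable. -/
def NVMDistinguishable {V₁ V₂ : Type} {G₁ : SimpleGraph V₁} {G₂ : SimpleGraph V₂} {ε : ℝ}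
    (M₁ : NVM G₁ ε) (u₁ : V₁) (M₂ : NVM G₂ ε) (u₂ : V₂) : Prop :=
  ∃ S : (t : ℕ) → (Fin (t + 1) → ℝ) → ℝ, DistinguishableBy M₁ u₁ M₂ u₂ S

/-- Covariance of two real random variables. -/
def covR {space : Type} [MeasurableSpace space] (P : MeasureTheory.Measure space) (f g : space → ℝ) : ℝ :=
  ∫ ω, (f ω - ∫ x, f x ∂P) * (g ω - ∫ x, g x ∂P) ∂P


-- ===== Auxiliary development =====
open MeasureTheory

namespace NVM

variable {V : Type} {G : SimpleGraph V} {ε : ℝ}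

/-- A connected locally finite graph is countable. -/
lemma countable_of_connected (hG : G.Connected) (hlf : ∀ v, (G.neighborSet v).Finite) :
    Countable V := by
  obtain ⟨u⟩ : Nonempty V := hG.nonempty
  let g : List ℕ → V := fun l => l.foldr (fun k w => ((hlf w).toFinset.toList.getD k w)) u
  have hstep : ∀ (x y : V), (∃ l, g l = x) → G.Adj x y → ∃ l, g l = y := by
    rintro x y ⟨l, rfl⟩ hadj
    have hy : y ∈ (hlf (g l)).toFinset.toList := by
      simp [Set.Finite.mem_toFinset]
      exact hadj
    obtain ⟨k, hk, hget⟩ := List.getElem_of_mem hy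
    refine ⟨k :: l, ?_⟩
    show (hlf (g l)).toFinset.toList.getD k (g l) = y
    rw [List.getD_eq_getElem _ _ hk, hget]
  have hwalk : ∀ (x y : V), G.Walk x y → (∃ l, g l = x) → ∃ l, g l = y := by
    intro x y p
    induction p with
    | nil => exact id
    | cons h q ih => exact fun hx => ih (hstep _ _ hx h)
  have hsurj : Function.Surjective g := by
    intro v
    obtain ⟨p⟩ := hG.preconnected u v
    exact hwalk u v p ⟨[], rfl⟩
  exact hsurj.countable

/-- The one-coordinate density of `Z`. -/
def dens (G : SimpleGraph V) (ε : ℝ) (v : V) (z : Bool × Bool × V) : ℝ≥0∞ :=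
  (if z.1 then ENNReal.ofReal ε else ENNReal.ofReal (1 - ε)) * (1 / 2) *
    (if z.2.2 ∈ G.neighborSet v then ((Nat.card (G.neighborSet v) : ℝ≥0∞))⁻¹ else 0)

lemma measurableSet_Zeq (M : NVM G ε) (t : ℕ) (v : V) (z : Bool × Bool × V) :
    MeasurableSet {ω | M.Z t v ω = z} := M.meas t v z.1 z.2.1 z.2.2

lemma P_Zeq (M : NVM G ε) (t : ℕ) (v : V) (z : Bool × Bool × V) :
    M.P {ω | M.Z t v ω = z} = dens G ε v z := M.dist t v z.1 z.2.1 z.2.2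

/-- Cylinder event. -/
def cylSet (M : NVM G ε) (F : Finset (ℕ × V)) (a : ℕ × V → Bool × Bool × V) : Set M.space :=
  {ω | ∀ p ∈ F, M.Z p.1 p.2 ω = a p}

lemma P_cylSet (M : NVM G ε) (F : Finset (ℕ × V)) (a : ℕ × V → Bool × Bool × V) :
    M.P (cylSet M F a) = ∏ p ∈ F, M.P {ω | M.Z p.1 p.2 ω = a p} := M.indep F a

lemma measurableSet_cylSet (M : NVM G ε) (F : Finset (ℕ × V)) (a : ℕ × V → Bool × Bool × V) :
    MeasurableSet (cylSet M F a) := by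
  have h : cylSet M F a = ⋂ p ∈ F, {ω | M.Z p.1 p.2 ω = a p} := by
    ext ω; simp [cylSet]
  rw [h]
  exact F.measurableSet_biInter fun p _ => M.measurableSet_Zeq p.1 p.2 (a p)

lemma cylSet_empty (M : NVM G ε) (a : ℕ × V → Bool × Bool × V) :
    cylSet M ∅ a = Set.univ := by ext ω; simp [cylSet]

lemma cylSet_congr (M : NVM G ε) {F : Finset (ℕ × V)} {a a' : ℕ × V → Bool × Bool × V}
    (h : ∀ p ∈ F, a p = a' p) : cylSet M F a = cylSet M F a' := by
  ext ω
  constructor <;> intro hω p hp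
  · rw [← h p hp]; exact hω p hp
  · rw [h p hp]; exact hω p hp

lemma cylSet_insert (M : NVM G ε) {p₀ : ℕ × V} {F : Finset (ℕ × V)}
    (a : ℕ × V → Bool × Bool × V) :
    cylSet M (insert p₀ F) a = {ω | M.Z p₀.1 p₀.2 ω = a p₀} ∩ cylSet M F a := by
  ext ω
  simp only [cylSet, Set.mem_setOf_eq, Set.mem_inter_iff, Finset.mem_insert]
  constructor
  · intro h; exact ⟨h p₀ (Or.inl rfl), fun p hp => h p (Or.inr hp)⟩
  · rintro ⟨h₀, h⟩ p (rfl | hp)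
    · exact h₀
    · exact h p hp

lemma P_cylSet_insert (M : NVM G ε) {p₀ : ℕ × V} {F : Finset (ℕ × V)} (hp₀ : p₀ ∉ F)
    (a : ℕ × V → Bool × Bool × V) :
    M.P (cylSet M (insert p₀ F) a) = M.P {ω | M.Z p₀.1 p₀.2 ω = a p₀} * M.P (cylSet M F a) := by
  rw [P_cylSet, Finset.prod_insert hp₀, ← P_cylSet]

/-- Backward-path evaluator: `Xup M c n v` computes the opinion at `(v, c+n)` using
only the randomness at times `c+1, …, c+n`; `none` if no refresh occurs in that window. -/
def Xup (M : NVM G ε) (c : ℕ) : ℕ → V → M.space → Option Bool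
  | 0, _, _ => none
  | n+1, v, ω =>
      if (M.Z (c+n+1) v ω).1 then some ((M.Z (c+n+1) v ω).2.1)
      else Xup M c n ((M.Z (c+n+1) v ω).2.2) ω

lemma Xup_eq_X (M : NVM G ε) (c : ℕ) :
    ∀ (n : ℕ) (v : V) (ω : M.space) (b : Bool), M.Xup c n v ω = some b → M.X (c+n) v ω = b := by
  intro n
  induction n with
  | zero => intro v ω b h; simp [Xup] at h
  | succ n ih =>
    intro v ω b h
    have hx : M.X (c+n+1) v ω =
        if M.xi (c+n+1) v ω then M.fresh (c+n+1) v ω else M.X (c+n) (M.eta (c+n+1) v ω) ω := rfl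
    rw [show c + (n+1) = (c+n)+1 from rfl, hx]
    simp only [xi, fresh, eta]
    unfold Xup at h
    by_cases hxi : (M.Z (c+n+1) v ω).1
    · rw [if_pos hxi] at h
      show (if (M.Z (c+n+1) v ω).1 = true then (M.Z (c+n+1) v ω).2.1 else M.X (c+n) (M.Z (c+n+1) v ω).2.2 ω) = b
      rw [if_pos hxi]
      exact (Option.some_injective _ h.symm).symm
    · rw [if_neg hxi] at h
      show (if (M.Z (c+n+1) v ω).1 = true then (M.Z (c+n+1) v ω).2.1 else M.X (c+n) (M.Z (c+n+1) v ω).2.2 ω) = b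
      rw [if_neg hxi]
      exact ih _ ω b h

/-- Decomposition of the event `{Xup c (n+1) v = o}` according to the top-level randomness. -/
lemma Xup_succ_event (M : NVM G ε) (c n : ℕ) (v : V) (o : Option Bool) :
    {ω | M.Xup c (n+1) v ω = o} =
      ⋃ z : Bool × Bool × V, {ω | M.Z (c+n+1) v ω = z} ∩
        (if z.1 then {ω : M.space | some z.2.1 = o} else {ω | M.Xup c n z.2.2 ω = o}) := by
  ext ω
  simp only [Set.mem_setOf_eq, Set.mem_iUnion, Set.mem_inter_iff]
  constructor
  · intro h
    refine ⟨M.Z (c+n+1) v ω, rfl, ?_⟩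
    unfold Xup at h
    by_cases hxi : (M.Z (c+n+1) v ω).1
    · rw [if_pos hxi] at h ⊢; exact h
    · rw [if_neg hxi] at h ⊢; exact h
  · rintro ⟨z, hz, hmem⟩
    unfold Xup
    rw [hz]
    by_cases hxi : z.1
    · rw [if_pos hxi] at hmem ⊢; exact hmem
    · rw [if_neg hxi] at hmem ⊢; exact hmem

lemma measurableSet_Xup [Countable V] (M : NVM G ε) (c : ℕ) :
    ∀ (n : ℕ) (v : V) (o : Option Bool), MeasurableSet {ω | M.Xup c n v ω = o} := by
  intro n
  induction n with
  | zero =>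
    intro v o
    cases o with
    | none => convert MeasurableSet.univ using 1; ext ω; simp [Xup]
    | some b => convert MeasurableSet.empty using 1; ext ω; simp [Xup]
  | succ n ih =>
    intro v o
    rw [Xup_succ_event]
    refine MeasurableSet.iUnion fun z => (M.measurableSet_Zeq _ _ _).inter ?_
    by_cases hz : z.1
    · rw [if_pos hz]
      by_cases ho : (some z.2.1 = o)
      · convert MeasurableSet.univ using 1; ext ω; simp [ho]
      · convert MeasurableSet.empty using 1; ext ω; simp [ho]
    · rw [if_neg hz]; exact ih _ _

lemma P_Xup_cyl [Countable V] (M : NVM G ε) :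
    ∀ (n c : ℕ) (v : V) (o : Option Bool) (F : Finset (ℕ × V)) (a : ℕ × V → Bool × Bool × V),
      (∀ p ∈ F, c + n < p.1) →
      M.P ({ω | M.Xup c n v ω = o} ∩ cylSet M F a)
        = M.P {ω | M.Xup 0 n v ω = o} * M.P (cylSet M F a) := by
  have hPr := M.isProb
  intro n
  induction n with
  | zero =>
    intro c v o F a _
    cases o with
    | none =>
      have h1 : ∀ c', {ω | M.Xup c' 0 v ω = none} = Set.univ := fun c' => by ext ω; simp [Xup]
      rw [h1, h1, Set.univ_inter, measure_univ, one_mul]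
    | some b =>
      have h1 : ∀ c', {ω | M.Xup c' 0 v ω = some b} = (∅ : Set M.space) := fun c' => by
        ext ω; simp [Xup]
      rw [h1, h1, Set.empty_inter, measure_empty, zero_mul]
  | succ n ih =>
    intro c v o F a hF
    set coef : Bool × Bool × V → ℝ≥0∞ := fun z =>
      if z.1 then (if some z.2.1 = o then dens G ε v z else 0)
      else M.P {ω | M.Xup 0 n z.2.2 ω = o} * dens G ε v z with hcoef
    have key : ∀ (c' : ℕ) (F' : Finset (ℕ × V)) (a' : ℕ × V → Bool × Bool × V),
        (∀ p ∈ F', c' + (n+1) < p.1) →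
        M.P ({ω | M.Xup c' (n+1) v ω = o} ∩ cylSet M F' a')
          = (∑' z, coef z) * M.P (cylSet M F' a') := by
      intro c' F' a' hF'
      set T : Bool × Bool × V → Set M.space := fun z =>
        if z.1 then {ω : M.space | some z.2.1 = o} else {ω | M.Xup c' n z.2.2 ω = o} with hT
      have hTmeas : ∀ z, MeasurableSet (T z) := by
        intro z
        by_cases hz : z.1
        · rw [hT]; simp only [if_pos hz]
          by_cases ho : (some z.2.1 = o)
          · convert MeasurableSet.univ using 1; ext ω; simp [ho]
          · convert MeasurableSet.empty using 1; ext ω; simp [ho]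
        · rw [hT]; simp only [if_neg hz]; exact M.measurableSet_Xup c' n _ o
      have hdecomp : {ω | M.Xup c' (n+1) v ω = o} ∩ cylSet M F' a'
          = ⋃ z : Bool × Bool × V,
              ({ω | M.Z (c'+n+1) v ω = z} ∩ T z) ∩ cylSet M F' a' := by
        rw [Xup_succ_event, Set.iUnion_inter]
      rw [hdecomp, measure_iUnion]
      rotate_left
      · intro z z' hne
        refine Set.disjoint_left.2 fun ω hω hω' => hne ?_
        have h1 : M.Z (c'+n+1) v ω = z := hω.1.1
        have h2 : M.Z (c'+n+1) v ω = z' := hω'.1.1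
        rw [← h1, h2]
      · exact fun z => ((M.measurableSet_Zeq _ _ _).inter (hTmeas z)).inter
          (measurableSet_cylSet M F' a')
      rw [← ENNReal.tsum_mul_right]
      refine tsum_congr fun z => ?_
      have hp₀ : ((c'+n+1, v) : ℕ × V) ∉ F' := by
        intro hmem
        have := hF' _ hmem
        simp only at this
        omega
      have hne : ∀ p ∈ F', p ≠ ((c'+n+1, v) : ℕ × V) := by
        intro p hp heq
        have := hF' p hp
        rw [heq] at this
        simp only at this
        omega
      set a'' : ℕ × V → Bool × Bool × V := Function.update a' (c'+n+1, v) z with ha''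
      have hcyl_eq : cylSet M F' a' = cylSet M F' a'' :=
        cylSet_congr M fun p hp => (Function.update_of_ne (hne p hp) z a').symm
      have hZset : {ω | M.Z (c'+n+1) v ω = z}
          = {ω | M.Z ((c'+n+1, v) : ℕ × V).1 ((c'+n+1, v) : ℕ × V).2 ω = a'' (c'+n+1, v)} := by
        rw [ha'', Function.update_self]
      have hins : {ω | M.Z (c'+n+1) v ω = z} ∩ cylSet M F' a'
          = cylSet M (insert ((c'+n+1, v) : ℕ × V) F') a'' := by
        rw [cylSet_insert, hcyl_eq, hZset]
      have hPins : M.P (cylSet M (insert ((c'+n+1, v) : ℕ × V) F') a'')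
          = dens G ε v z * M.P (cylSet M F' a') := by
        rw [P_cylSet_insert M hp₀, ← hZset, P_Zeq, hcyl_eq]
      by_cases hz : z.1
      · by_cases ho : (some z.2.1 = o)
        · have hTz : T z = Set.univ := by rw [hT]; simp only [if_pos hz]; ext ω; simp [ho]
          rw [hTz, Set.inter_univ, hins, hPins, hcoef]
          simp only [if_pos hz, if_pos ho]
        · have hTz : T z = ∅ := by rw [hT]; simp only [if_pos hz]; ext ω; simp [ho]
          rw [hTz, Set.inter_empty, Set.empty_inter, measure_empty, hcoef]
          simp only [if_pos hz, if_neg ho, zero_mul]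
      · have hTz : T z = {ω | M.Xup c' n z.2.2 ω = o} := by rw [hT]; simp only [if_neg hz]
        have hre : ({ω | M.Z (c'+n+1) v ω = z} ∩ T z) ∩ cylSet M F' a'
            = {ω | M.Xup c' n z.2.2 ω = o} ∩ cylSet M (insert ((c'+n+1, v) : ℕ × V) F') a'' := by
          rw [hTz, ← hins]
          ext ω
          simp only [Set.mem_inter_iff, Set.mem_setOf_eq]
          tauto
        rw [hre, ih c' z.2.2 o _ a'' ?side, hPins, hcoef]
        · simp only [if_neg hz]
          try ring
        case side =>
          intro p hp
          rcases Finset.mem_insert.1 hp with rfl | hp'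
          · simp
          · exact lt_trans (by omega) (hF' p hp')
    have h0 : M.P {ω | M.Xup 0 (n+1) v ω = o} = ∑' z, coef z := by
      have h := key 0 ∅ a (by simp)
      rwa [cylSet_empty, Set.inter_univ, measure_univ, mul_one] at h
    rw [key c F a hF, h0]

lemma P_Xup_none_le [Countable V] (M : NVM G ε) (hlf : ∀ v, (G.neighborSet v).Finite) :
    ∀ (n c : ℕ) (v : V), M.P {ω | M.Xup c n v ω = none} ≤ ENNReal.ofReal (1-ε) ^ n := by
  have hPr := M.isProb
  intro n
  induction n with
  | zero =>
    intro c v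
    have h1 : {ω | M.Xup c 0 v ω = none} = Set.univ := by ext ω; simp [Xup]
    rw [h1, measure_univ, pow_zero]
  | succ n ih =>
    intro c v
    have hTmeas : ∀ z : Bool × Bool × V, MeasurableSet
        (if z.1 then {ω : M.space | (some z.2.1 : Option Bool) = none}
         else {ω | M.Xup c n z.2.2 ω = none}) := by
      intro z; by_cases hz : z.1
      · simp only [if_pos hz]
        convert MeasurableSet.empty using 1; ext ω; simp
      · simp only [if_neg hz]; exact M.measurableSet_Xup c n _ none
    rw [Xup_succ_event M c n v none, measure_iUnion ?hd ?hm]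
    case hd =>
      intro z z' hne
      refine Set.disjoint_left.2 fun ω hω hω' => hne ?_
      rw [← hω.1, hω'.1]
    case hm => exact fun z => (M.measurableSet_Zeq _ _ _).inter (hTmeas z)
    have hterm : ∀ z : Bool × Bool × V,
        M.P ({ω | M.Z (c+n+1) v ω = z} ∩
          (if z.1 then {ω : M.space | (some z.2.1 : Option Bool) = none}
           else {ω | M.Xup c n z.2.2 ω = none}))
        ≤ (if z.1 then 0 else ENNReal.ofReal (1-ε) ^ n * dens G ε v z) := by
      intro z
      by_cases hz : z.1
      · rw [if_pos hz, if_pos hz]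
        have he : {ω : M.space | (some z.2.1 : Option Bool) = none} = ∅ := by ext ω; simp
        rw [he, Set.inter_empty, measure_empty]
      · rw [if_neg hz, if_neg hz]
        have hcc : {ω | M.Z (c+n+1) v ω = z}
            = cylSet M {((c+n+1, v) : ℕ × V)} (fun _ => z) := by
          ext ω; simp [cylSet]
        rw [Set.inter_comm, hcc,
          P_Xup_cyl M n c z.2.2 none {((c+n+1, v) : ℕ × V)} (fun _ => z) ?hside]
        case hside =>
          intro p hp
          rw [Finset.mem_singleton] at hp
          rw [hp]
          simp
        rw [← hcc, P_Zeq]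
        exact mul_le_mul_left (ih 0 z.2.2) _
    refine le_trans (ENNReal.tsum_le_tsum hterm) ?_
    have hsplit : ∀ z : Bool × Bool × V,
        (if z.1 then 0 else ENNReal.ofReal (1-ε) ^ n * dens G ε v z)
        = ENNReal.ofReal (1-ε) ^ n * (if z.1 then 0 else dens G ε v z) := by
      intro z; by_cases hz : z.1 <;> simp [hz]
    rw [tsum_congr hsplit, ENNReal.tsum_mul_left]
    -- bound the remaining sum by ofReal (1-ε)
    have hSN : (∑' w : V, (if w ∈ G.neighborSet v then
        ((Nat.card (G.neighborSet v) : ℝ≥0∞))⁻¹ else 0)) ≤ 1 := by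
      rw [tsum_eq_sum (s := (hlf v).toFinset)
        (fun w hw => if_neg (fun hmem => hw ((hlf v).mem_toFinset.2 hmem)))]
      have hc : ∀ w ∈ (hlf v).toFinset,
          (if w ∈ G.neighborSet v then ((Nat.card (G.neighborSet v) : ℝ≥0∞))⁻¹ else 0)
          = ((Nat.card (G.neighborSet v) : ℝ≥0∞))⁻¹ :=
        fun w hw => if_pos ((hlf v).mem_toFinset.1 hw)
      rw [Finset.sum_congr rfl hc, Finset.sum_const, Nat.card_eq_card_finite_toFinset (hlf v)]
      rcases Nat.eq_zero_or_pos ((hlf v).toFinset.card) with hk | hk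
      · simp [hk]
      · rw [nsmul_eq_mul, ENNReal.mul_inv_cancel
          (by exact_mod_cast hk.ne') (ENNReal.natCast_ne_top _)]
    have hS : (∑' z : Bool × Bool × V, (if z.1 then 0 else dens G ε v z))
        ≤ ENNReal.ofReal (1-ε) := by
      rw [ENNReal.tsum_prod']
      rw [tsum_bool]
      simp only [if_true, if_false]
      rw [tsum_zero, add_zero]
      have : ∀ y : Bool × V, dens G ε v ((false, y) : Bool × Bool × V)
          = ENNReal.ofReal (1-ε) * (1/2) *
            (if y.2 ∈ G.neighborSet v then ((Nat.card (G.neighborSet v) : ℝ≥0∞))⁻¹ else 0) := by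
        intro y; rfl
      have hfalse : ∀ b : Bool × V,
          (if (false : Bool) = true then (0:ℝ≥0∞) else dens G ε v ((false, b) : Bool × Bool × V))
          = dens G ε v ((false, b) : Bool × Bool × V) := fun b => by simp
      rw [tsum_congr hfalse, tsum_congr this]
      rw [ENNReal.tsum_prod', tsum_bool]
      rw [ENNReal.tsum_mul_left]
      have hfix : (∑' (i : V), if ((false, i) : Bool × V).2 ∈ G.neighborSet v then
          ((Nat.card ↑(G.neighborSet v)) : ℝ≥0∞)⁻¹ else 0)
          = ∑' (w : V), if w ∈ G.neighborSet v then
          ((Nat.card ↑(G.neighborSet v)) : ℝ≥0∞)⁻¹ else 0 := rfl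
      rw [hfix]
      calc ENNReal.ofReal (1-ε) * (1/2) * (∑' w : V, (if w ∈ G.neighborSet v then
              ((Nat.card (G.neighborSet v) : ℝ≥0∞))⁻¹ else 0))
            + ENNReal.ofReal (1-ε) * (1/2) * (∑' w : V, (if w ∈ G.neighborSet v then
              ((Nat.card (G.neighborSet v) : ℝ≥0∞))⁻¹ else 0))
          ≤ ENNReal.ofReal (1-ε) * (1/2) * 1 + ENNReal.ofReal (1-ε) * (1/2) * 1 := by
            gcongr <;> exact hSN
        _ = ENNReal.ofReal (1-ε) := by
            rw [mul_one, ← mul_add,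
              show ((1:ℝ≥0∞)/2 + 1/2) = 1 from ENNReal.add_halves 1, mul_one]
    calc ENNReal.ofReal (1-ε) ^ n * (∑' z : Bool × Bool × V, (if z.1 then 0 else dens G ε v z))
        ≤ ENNReal.ofReal (1-ε) ^ n * ENNReal.ofReal (1-ε) := mul_le_mul_right hS _
      _ = ENNReal.ofReal (1-ε) ^ (n+1) := (pow_succ _ _).symm

/-- Canonical coordinate space for a time window of the driving noise. -/
def Canon (V : Type) : Type := (ℕ × V) → Bool × Bool × V

instance canonMS : MeasurableSpace (Canon V) :=
  ⨆ p : ℕ × V, MeasurableSpace.comap (fun f : Canon V => f p) ⊤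

lemma measurableSet_eval (p : ℕ × V) (T : Set (Bool × Bool × V)) :
    MeasurableSet ((fun f : Canon V => f p) ⁻¹' T) := by
  have h1 : MeasurableSet[MeasurableSpace.comap (fun f : Canon V => f p) ⊤]
      ((fun f : Canon V => f p) ⁻¹' T) := ⟨T, trivial, rfl⟩
  exact MeasurableSpace.le_def.mp
    (le_iSup (fun p : ℕ × V => MeasurableSpace.comap (fun f : Canon V => f p) ⊤) p) _ h1

lemma measurableSet_evalEq (p : ℕ × V) (z : Bool × Bool × V) :
    MeasurableSet {f : Canon V | f p = z} := by
  have : {f : Canon V | f p = z} = (fun f : Canon V => f p) ⁻¹' {z} := by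
    ext f; simp
  rw [this]; exact measurableSet_eval p {z}

/-- Cylinder sets in the canonical space. -/
def ccylC (F : Finset (ℕ × V)) (a : ℕ × V → Bool × Bool × V) : Set (Canon V) :=
  {f | ∀ p ∈ F, f p = a p}

lemma measurableSet_ccylC (F : Finset (ℕ × V)) (a : ℕ × V → Bool × Bool × V) :
    MeasurableSet (ccylC F a) := by
  have h : ccylC F a = ⋂ p ∈ F, {f : Canon V | f p = a p} := by ext f; simp [ccylC]
  rw [h]
  exact F.measurableSet_biInter fun p _ => measurableSet_evalEq p (a p)

/-- The collection of cylinder sets. -/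
def cylCol (V : Type) : Set (Set (Canon V)) := {S | ∃ F a, S = ccylC F a}

lemma isPiSystem_cylCol : IsPiSystem (cylCol V) := by
  rintro S₁ ⟨F₁, a₁, rfl⟩ S₂ ⟨F₂, a₂, rfl⟩ hne
  obtain ⟨f₀, hf₁, hf₂⟩ := hne
  refine ⟨F₁ ∪ F₂, fun p => if p ∈ F₁ then a₁ p else a₂ p, ?_⟩
  ext f
  simp only [ccylC, Set.mem_inter_iff, Set.mem_setOf_eq, Finset.mem_union]
  constructor
  · rintro ⟨h₁, h₂⟩ p hp
    by_cases hpF : p ∈ F₁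
    · rw [if_pos hpF]; exact h₁ p hpF
    · rw [if_neg hpF]; exact h₂ p (hp.resolve_left hpF)
  · intro h
    constructor
    · intro p hp
      have := h p (Or.inl hp)
      rwa [if_pos hp] at this
    · intro p hp
      have := h p (Or.inr hp)
      by_cases hpF : p ∈ F₁
      · rw [if_pos hpF] at this
        rw [this, ← hf₁ p hpF, hf₂ p hp]
      · rwa [if_neg hpF] at this

lemma canonMS_eq_generateFrom [Countable V] :
    (canonMS : MeasurableSpace (Canon V)) = .generateFrom (cylCol V) := by
  apply le_antisymm
  · refine iSup_le fun p => ?_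
    refine MeasurableSpace.le_def.mpr ?_
    rintro s ⟨t, -, rfl⟩
    have h : (fun f : Canon V => f p) ⁻¹' t = ⋃ z ∈ t, {f : Canon V | f p = z} := by
      ext f; simp
    rw [h]
    exact MeasurableSet.biUnion t.to_countable fun z _ =>
      MeasurableSpace.measurableSet_generateFrom
        ⟨{p}, fun _ => z, by ext f; simp [ccylC]⟩
  · refine MeasurableSpace.generateFrom_le ?_
    rintro S ⟨F, a, rfl⟩
    exact measurableSet_ccylC F a

/-- The window map reading off the noise from time `c+1` upwards (coordinate `(r,v)`
is the noise at time `c+r` at vertex `v`). -/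
def shiftMap (M : NVM G ε) (c : ℕ) (ω : M.space) : Canon V := fun p => M.Z (c + p.1) p.2 ω

lemma measurable_shiftMap [Countable V] (M : NVM G ε) (c : ℕ) :
    Measurable (shiftMap M c) := by
  rw [show (canonMS : MeasurableSpace (Canon V)) = .generateFrom (cylCol V) from
    canonMS_eq_generateFrom]
  refine measurable_generateFrom ?_
  rintro S ⟨F, a, rfl⟩
  have h : shiftMap M c ⁻¹' ccylC F a = ⋂ p ∈ F, {ω | M.Z (c + p.1) p.2 ω = a p} := by
    ext ω; simp [ccylC, shiftMap]
  rw [h]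
  exact F.measurableSet_biInter fun p _ => M.measurableSet_Zeq _ _ _

lemma map_shiftMap [Countable V] (M : NVM G ε) (c : ℕ) :
    MeasureTheory.Measure.map (shiftMap M c) M.P
      = MeasureTheory.Measure.map (shiftMap M 0) M.P := by
  have hPr := M.isProb
  have hmc : ∀ c', Measurable (shiftMap M c') := fun c' => measurable_shiftMap M c'
  have : IsProbabilityMeasure (MeasureTheory.Measure.map (shiftMap M c) M.P) :=
    isProbabilityMeasure_map (hmc c).aemeasurable
  refine MeasureTheory.ext_of_generate_finite (cylCol V) canonMS_eq_generateFrom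
    isPiSystem_cylCol ?_ ?_
  · rintro S ⟨F, a, rfl⟩
    have key : ∀ c', M.P (shiftMap M c' ⁻¹' ccylC F a) = ∏ p ∈ F, dens G ε p.2 (a p) := by
      intro c'
      have hpre : shiftMap M c' ⁻¹' ccylC F a
          = cylSet M (F.image (fun p => (c' + p.1, p.2))) (fun q => a (q.1 - c', q.2)) := by
        ext ω
        simp only [cylSet, ccylC, Set.mem_preimage, Set.mem_setOf_eq, Finset.mem_image,
          shiftMap]
        constructor
        · rintro h q ⟨p, hp, rfl⟩
          have h2 := h p hp
          have h3 : c' + p.1 - c' = p.1 := by omega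
          simpa [h3] using h2
        · intro h p hp
          have h2 := h (c' + p.1, p.2) ⟨p, hp, rfl⟩
          have h3 : c' + p.1 - c' = p.1 := by omega
          simpa [h3] using h2
      rw [hpre, P_cylSet, Finset.prod_image ?inj]
      case inj =>
        intro x _ y _ hxy
        obtain ⟨h1, h2⟩ := Prod.mk.injEq _ _ _ _ ▸ hxy
        have : x.1 = y.1 := by omega
        exact Prod.ext this h2
      refine Finset.prod_congr rfl fun p hp => ?_
      have h3 : c' + p.1 - c' = p.1 := by omega
      simp only [h3]
      exact P_Zeq M (c' + p.1) p.2 (a p)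
    rw [MeasureTheory.Measure.map_apply (hmc c) (measurableSet_ccylC F a),
      MeasureTheory.Measure.map_apply (hmc 0) (measurableSet_ccylC F a), key, key]
  · rw [MeasureTheory.Measure.map_apply (hmc c) MeasurableSet.univ,
      MeasureTheory.Measure.map_apply (hmc 0) MeasurableSet.univ]
    simp

lemma P_shift_inv [Countable V] (M : NVM G ε) (c : ℕ) {E : Set (Canon V)}
    (hE : MeasurableSet E) :
    M.P (shiftMap M c ⁻¹' E) = M.P (shiftMap M 0 ⁻¹' E) := by
  rw [← MeasureTheory.Measure.map_apply (measurable_shiftMap M c) hE, map_shiftMap,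
    MeasureTheory.Measure.map_apply (measurable_shiftMap M 0) hE]

/-- Canonical version of the backward-path evaluator. -/
def XupC : ℕ → V → Canon V → Option Bool
  | 0, _, _ => none
  | n+1, v, f =>
      if (f (n+1, v)).1 then some ((f (n+1, v)).2.1) else XupC n ((f (n+1, v)).2.2) f

lemma Xup_eq_XupC (M : NVM G ε) (c : ℕ) :
    ∀ (n : ℕ) (v : V) (ω : M.space), M.Xup c n v ω = XupC n v (shiftMap M c ω) := by
  intro n
  induction n with
  | zero => intro v ω; rfl
  | succ n ih =>
    intro v ω
    show M.Xup c (n+1) v ω = XupC (n+1) v (shiftMap M c ω)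
    have hz : (shiftMap M c ω) (n+1, v) = M.Z (c+n+1) v ω := rfl
    unfold Xup XupC
    rw [hz]
    by_cases hxi : (M.Z (c+n+1) v ω).1
    · rw [if_pos hxi, if_pos hxi]
    · rw [if_neg hxi, if_neg hxi, ih]

lemma XupC_succ_event (n : ℕ) (v : V) (o : Option Bool) :
    {f : Canon V | XupC (n+1) v f = o} =
      ⋃ z : Bool × Bool × V, {f : Canon V | f (n+1, v) = z} ∩
        (if z.1 then {f : Canon V | some z.2.1 = o} else {f | XupC n z.2.2 f = o}) := by
  ext f
  simp only [Set.mem_setOf_eq, Set.mem_iUnion, Set.mem_inter_iff]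
  constructor
  · intro h
    refine ⟨f (n+1, v), rfl, ?_⟩
    unfold XupC at h
    by_cases hxi : (f (n+1, v)).1
    · rw [if_pos hxi] at h ⊢; exact h
    · rw [if_neg hxi] at h ⊢; exact h
  · rintro ⟨z, hz, hmem⟩
    unfold XupC
    rw [hz]
    by_cases hxi : z.1
    · rw [if_pos hxi] at hmem ⊢; exact hmem
    · rw [if_neg hxi] at hmem ⊢; exact hmem

lemma measurableSet_XupC [Countable V] :
    ∀ (n : ℕ) (v : V) (o : Option Bool), MeasurableSet {f : Canon V | XupC n v f = o} := by
  intro n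
  induction n with
  | zero =>
    intro v o
    cases o with
    | none => convert MeasurableSet.univ using 1; ext f; simp [XupC]
    | some b => convert MeasurableSet.empty using 1; ext f; simp [XupC]
  | succ n ih =>
    intro v o
    rw [XupC_succ_event]
    refine MeasurableSet.iUnion fun z => (measurableSet_evalEq _ z).inter ?_
    by_cases hz : z.1
    · rw [if_pos hz]
      by_cases ho : (some z.2.1 = o)
      · convert MeasurableSet.univ using 1; ext f; simp [ho]
      · convert MeasurableSet.empty using 1; ext f; simp [ho]
    · rw [if_neg hz]; exact ih _ _

/-- The "pair coupling" event in the canonical space. -/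
def E2 (u : V) (d j : ℕ) : Set (Canon V) :=
  {f | ∃ b : Bool, XupC j u f = some b ∧ XupC (j+d) u f = some b}

/-- The "quadruple coupling" event in the canonical space. -/
def E4 (u : V) (d j j' : ℕ) : Set (Canon V) := E2 u d j ∩ E2 u d j'

lemma measurableSet_E2 [Countable V] (u : V) (d j : ℕ) : MeasurableSet (E2 u d j) := by
  have h : E2 u d j = ⋃ b : Bool,
      {f : Canon V | XupC j u f = some b} ∩ {f | XupC (j+d) u f = some b} := by
    ext f; simp [E2]
  rw [h]
  exact MeasurableSet.iUnion fun b => (measurableSet_XupC j u _).inter (measurableSet_XupC _ u _)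

lemma measurableSet_E4 [Countable V] (u : V) (d j j' : ℕ) : MeasurableSet (E4 u d j j') :=
  (measurableSet_E2 u d j).inter (measurableSet_E2 u d j')

/-- Opinion-agreement event for `ζ_{c+j}`. -/
def Aev (M : NVM G ε) (u : V) (d t : ℕ) : Set M.space :=
  {ω | M.X t u ω = M.X (t+d) u ω}

lemma preE2_subset (M : NVM G ε) (u : V) (d c j : ℕ) :
    shiftMap M c ⁻¹' E2 u d j ⊆ Aev M u d (c+j) := by
  rintro ω ⟨b, h1, h2⟩
  rw [← Xup_eq_XupC] at h1 h2
  have hx1 := Xup_eq_X M c j u ω b h1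
  have hx2 := Xup_eq_X M c (j+d) u ω b h2
  show M.X (c+j) u ω = M.X (c+j+d) u ω
  rw [hx1, ← Nat.add_assoc] at *
  rw [hx2]

lemma subset_preE2 (M : NVM G ε) (u : V) (d c j : ℕ) :
    Aev M u d (c+j) ⊆ shiftMap M c ⁻¹' E2 u d j
      ∪ ({ω | M.Xup c j u ω = none} ∪ {ω | M.Xup c (j+d) u ω = none}) := by
  intro ω hω
  by_cases h1 : M.Xup c j u ω = none
  · exact Or.inr (Or.inl h1)
  by_cases h2 : M.Xup c (j+d) u ω = none
  · exact Or.inr (Or.inr h2)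
  obtain ⟨b1, hb1⟩ := Option.ne_none_iff_exists'.1 h1
  obtain ⟨b2, hb2⟩ := Option.ne_none_iff_exists'.1 h2
  have hx1 := Xup_eq_X M c j u ω b1 hb1
  have hx2 := Xup_eq_X M c (j+d) u ω b2 hb2
  have hbb : b1 = b2 := by
    have hA : M.X (c+j) u ω = M.X (c+j+d) u ω := hω
    rw [hx1] at hA
    rw [← Nat.add_assoc] at hx2
    rw [hx2] at hA
    exact hA
  refine Or.inl ⟨b1, ?_, ?_⟩
  · rw [← Xup_eq_XupC]; exact hb1
  · rw [← Xup_eq_XupC]; rw [hb2, hbb]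

/-- The measurable sets `{X t v = b}`. -/
lemma measurableSet_X [Countable V] (M : NVM G ε) :
    ∀ (t : ℕ) (v : V) (b : Bool), MeasurableSet {ω | M.X t v ω = b} := by
  intro t
  induction t with
  | zero =>
    intro v b
    have h : {ω | M.X 0 v ω = b} = ⋃ z : Bool × Bool × V,
        {ω | M.Z 0 v ω = z} ∩ (if z.2.1 = b then Set.univ else (∅ : Set M.space)) := by
      ext ω
      simp only [Set.mem_setOf_eq, Set.mem_iUnion, Set.mem_inter_iff]
      constructor
      · intro h
        refine ⟨M.Z 0 v ω, rfl, ?_⟩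
        rw [if_pos]
        · trivial
        · exact h
      · rintro ⟨z, hz, hmem⟩
        by_cases hzb : z.2.1 = b
        · show M.fresh 0 v ω = b
          rw [fresh, hz, hzb]
        · rw [if_neg hzb] at hmem; exact hmem.elim
    rw [h]
    refine MeasurableSet.iUnion fun z => (M.measurableSet_Zeq _ _ _).inter ?_
    by_cases hzb : z.2.1 = b
    · rw [if_pos hzb]; exact MeasurableSet.univ
    · rw [if_neg hzb]; exact MeasurableSet.empty
  | succ t ih =>
    intro v b
    have h : {ω | M.X (t+1) v ω = b} = ⋃ z : Bool × Bool × V,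
        {ω | M.Z (t+1) v ω = z} ∩
          (if z.1 then (if z.2.1 = b then Set.univ else (∅ : Set M.space))
           else {ω | M.X t z.2.2 ω = b}) := by
      ext ω
      simp only [Set.mem_setOf_eq, Set.mem_iUnion, Set.mem_inter_iff]
      have hX : M.X (t+1) v ω =
          if (M.Z (t+1) v ω).1 then (M.Z (t+1) v ω).2.1 else M.X t ((M.Z (t+1) v ω).2.2) ω := rfl
      constructor
      · intro h
        refine ⟨M.Z (t+1) v ω, rfl, ?_⟩
        rw [hX] at h
        by_cases hxi : (M.Z (t+1) v ω).1
        · rw [if_pos hxi] at h ⊢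
          rw [if_pos h]; trivial
        · rw [if_neg hxi] at h ⊢; exact h
      · rintro ⟨z, hz, hmem⟩
        rw [hX, hz]
        by_cases hxi : z.1
        · rw [if_pos hxi] at hmem ⊢
          by_cases hzb : z.2.1 = b
          · exact hzb
          · rw [if_neg hzb] at hmem; exact hmem.elim
        · rw [if_neg hxi] at hmem ⊢; exact hmem
    rw [h]
    refine MeasurableSet.iUnion fun z => (M.measurableSet_Zeq _ _ _).inter ?_
    by_cases hxi : z.1
    · rw [if_pos hxi]
      by_cases hzb : z.2.1 = b
      · rw [if_pos hzb]; exact MeasurableSet.univ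
      · rw [if_neg hzb]; exact MeasurableSet.empty
    · rw [if_neg hxi]; exact ih _ _

lemma measurableSet_Aev [Countable V] (M : NVM G ε) (u : V) (d t : ℕ) :
    MeasurableSet (Aev M u d t) := by
  have h : Aev M u d t = ⋃ b : Bool, {ω | M.X t u ω = b} ∩ {ω | M.X (t+d) u ω = b} := by
    ext ω
    simp only [Aev, Set.mem_setOf_eq, Set.mem_iUnion, Set.mem_inter_iff]
    constructor
    · intro h; exact ⟨M.X (t+d) u ω, h, rfl⟩
    · rintro ⟨b, h1, h2⟩; rw [h1, h2]
  rw [h]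
  exact MeasurableSet.iUnion fun b => (measurableSet_X M t u b).inter (measurableSet_X M _ u b)

lemma abs_sub_le_of_sandwich {g B x y : ℝ≥0∞} (hgx : g ≤ x) (hgy : g ≤ y)
    (hx : x ≤ g + B) (hy : y ≤ g + B) (hxt : x ≠ ⊤) (hyt : y ≠ ⊤) (hgt : g ≠ ⊤)
    (hBt : B ≠ ⊤) : |x.toReal - y.toReal| ≤ B.toReal := by
  have hgBt : g + B ≠ ⊤ := by
    simp [ENNReal.add_eq_top, hgt, hBt]
  have h1 : x.toReal ≤ g.toReal + B.toReal := by
    have := ENNReal.toReal_mono hgBt hx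
    rwa [ENNReal.toReal_add hgt hBt] at this
  have h2 : y.toReal ≤ g.toReal + B.toReal := by
    have := ENNReal.toReal_mono hgBt hy
    rwa [ENNReal.toReal_add hgt hBt] at this
  have h3 : g.toReal ≤ x.toReal := ENNReal.toReal_mono hxt hgx
  have h4 : g.toReal ≤ y.toReal := ENNReal.toReal_mono hyt hgy
  rw [abs_sub_le_iff]
  constructor <;> linarith

lemma shift_pair_bound [Countable V] (M : NVM G ε) (hlf : ∀ v, (G.neighborSet v).Finite)
    (hε0 : 0 ≤ ε) (hε1 : ε ≤ 1) (u : V) (d j c : ℕ) :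
    |(M.P (Aev M u d (c+j))).toReal - (M.P (Aev M u d (0+j))).toReal| ≤ 2 * (1-ε)^j := by
  have hPr := M.isProb
  have hr0 : (0:ℝ) ≤ 1 - ε := by linarith
  set B : ℝ := (1-ε)^j + (1-ε)^(j+d) with hB
  have hBnn : 0 ≤ B := by positivity
  have hlow : ∀ c', M.P (shiftMap M 0 ⁻¹' E2 u d j) ≤ M.P (Aev M u d (c'+j)) := by
    intro c'
    rw [← P_shift_inv M c' (measurableSet_E2 u d j)]
    exact measure_mono (preE2_subset M u d c' j)
  have hupp : ∀ c', M.P (Aev M u d (c'+j))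
      ≤ M.P (shiftMap M 0 ⁻¹' E2 u d j) + ENNReal.ofReal B := by
    intro c'
    calc M.P (Aev M u d (c'+j))
        ≤ M.P (shiftMap M c' ⁻¹' E2 u d j
            ∪ ({ω | M.Xup c' j u ω = none} ∪ {ω | M.Xup c' (j+d) u ω = none})) :=
          measure_mono (subset_preE2 M u d c' j)
      _ ≤ M.P (shiftMap M c' ⁻¹' E2 u d j)
            + (M.P {ω | M.Xup c' j u ω = none} + M.P {ω | M.Xup c' (j+d) u ω = none}) :=
          le_trans (measure_union_le _ _) (by gcongr; exact measure_union_le _ _)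
      _ ≤ M.P (shiftMap M 0 ⁻¹' E2 u d j)
            + (ENNReal.ofReal (1-ε) ^ j + ENNReal.ofReal (1-ε) ^ (j+d)) := by
          rw [P_shift_inv M c' (measurableSet_E2 u d j)]
          gcongr
          · exact P_Xup_none_le M hlf j c' u
          · exact P_Xup_none_le M hlf (j+d) c' u
      _ = M.P (shiftMap M 0 ⁻¹' E2 u d j) + ENNReal.ofReal B := by
          rw [hB, ENNReal.ofReal_add (by positivity) (by positivity),
            ENNReal.ofReal_pow hr0, ENNReal.ofReal_pow hr0]
  have habs := abs_sub_le_of_sandwich (hlow c) (hlow 0) (hupp c) (hupp 0)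
    (measure_ne_top _ _) (measure_ne_top _ _) (measure_ne_top _ _) ENNReal.ofReal_ne_top
  rw [ENNReal.toReal_ofReal hBnn] at habs
  refine le_trans habs ?_
  rw [hB, two_mul]
  have hpj : (1-ε)^(j+d) ≤ (1-ε)^j :=
    pow_le_pow_of_le_one hr0 (by linarith) (Nat.le_add_right j d)
  linarith

lemma shift_quad_bound [Countable V] (M : NVM G ε) (hlf : ∀ v, (G.neighborSet v).Finite)
    (hε0 : 0 ≤ ε) (hε1 : ε ≤ 1) (u : V) (d j j' c : ℕ) :
    |(M.P (Aev M u d (c+j) ∩ Aev M u d (c+j'))).toReal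
      - (M.P (Aev M u d (0+j) ∩ Aev M u d (0+j'))).toReal|
      ≤ 2 * ((1-ε)^j + (1-ε)^(j')) := by
  have hPr := M.isProb
  have hr0 : (0:ℝ) ≤ 1 - ε := by linarith
  set B : ℝ := ((1-ε)^j + (1-ε)^(j+d)) + ((1-ε)^(j') + (1-ε)^(j'+d)) with hB
  have hBnn : 0 ≤ B := by positivity
  have hlow : ∀ c', M.P (shiftMap M 0 ⁻¹' E4 u d j j')
      ≤ M.P (Aev M u d (c'+j) ∩ Aev M u d (c'+j')) := by
    intro c'
    rw [← P_shift_inv M c' (measurableSet_E4 u d j j')]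
    refine measure_mono ?_
    intro ω hω
    exact ⟨preE2_subset M u d c' j hω.1, preE2_subset M u d c' j' hω.2⟩
  have hupp : ∀ c', M.P (Aev M u d (c'+j) ∩ Aev M u d (c'+j'))
      ≤ M.P (shiftMap M 0 ⁻¹' E4 u d j j') + ENNReal.ofReal B := by
    intro c'
    have hsub : Aev M u d (c'+j) ∩ Aev M u d (c'+j')
        ⊆ shiftMap M c' ⁻¹' E4 u d j j'
          ∪ (({ω | M.Xup c' j u ω = none} ∪ {ω | M.Xup c' (j+d) u ω = none})
            ∪ ({ω | M.Xup c' j' u ω = none} ∪ {ω | M.Xup c' (j'+d) u ω = none})) := by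
      intro ω hω
      rcases subset_preE2 M u d c' j hω.1 with h1 | h1
      · rcases subset_preE2 M u d c' j' hω.2 with h2 | h2
        · exact Or.inl ⟨h1, h2⟩
        · exact Or.inr (Or.inr h2)
      · exact Or.inr (Or.inl h1)
    calc M.P (Aev M u d (c'+j) ∩ Aev M u d (c'+j'))
        ≤ M.P (shiftMap M c' ⁻¹' E4 u d j j')
            + ((M.P {ω | M.Xup c' j u ω = none} + M.P {ω | M.Xup c' (j+d) u ω = none})
              + (M.P {ω | M.Xup c' j' u ω = none} + M.P {ω | M.Xup c' (j'+d) u ω = none})) := by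
          refine le_trans (measure_mono hsub) ?_
          refine le_trans (measure_union_le _ _) ?_
          gcongr
          refine le_trans (measure_union_le _ _) ?_
          gcongr <;> exact measure_union_le _ _
      _ ≤ M.P (shiftMap M 0 ⁻¹' E4 u d j j')
            + ((ENNReal.ofReal (1-ε) ^ j + ENNReal.ofReal (1-ε) ^ (j+d))
              + (ENNReal.ofReal (1-ε) ^ (j') + ENNReal.ofReal (1-ε) ^ (j'+d))) := by
          rw [P_shift_inv M c' (measurableSet_E4 u d j j')]
          gcongr <;> exact P_Xup_none_le M hlf _ c' u
      _ = M.P (shiftMap M 0 ⁻¹' E4 u d j j') + ENNReal.ofReal B := by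
          rw [hB, ENNReal.ofReal_add (by positivity) (by positivity),
            ENNReal.ofReal_add (by positivity) (by positivity),
            ENNReal.ofReal_add (by positivity) (by positivity)]
          simp only [ENNReal.ofReal_pow hr0]
  have habs := abs_sub_le_of_sandwich (hlow c) (hlow 0) (hupp c) (hupp 0)
    (measure_ne_top _ _) (measure_ne_top _ _) (measure_ne_top _ _) ENNReal.ofReal_ne_top
  rw [ENNReal.toReal_ofReal hBnn] at habs
  refine le_trans habs ?_
  have hpj : (1-ε)^(j+d) ≤ (1-ε)^j :=
    pow_le_pow_of_le_one hr0 (by linarith) (Nat.le_add_right j d)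
  have hpj' : (1-ε)^(j'+d) ≤ (1-ε)^(j') :=
    pow_le_pow_of_le_one hr0 (by linarith) (Nat.le_add_right j' d)
  rw [hB]
  linarith [hpj, hpj']

lemma zeta_eq_indicator (M : NVM G ε) (u : V) (d t : ℕ) :
    M.zeta u d t = (Aev M u d t).indicator (fun _ => (1:ℝ)) := by
  funext ω
  by_cases h : M.X t u ω = M.X (t+d) u ω <;>
    simp [NVM.zeta, Aev, Set.indicator_apply, h]

lemma zeta_mul_eq_indicator (M : NVM G ε) (u : V) (d t t' : ℕ) :
    (fun ω => M.zeta u d t ω * M.zeta u d t' ω)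
      = (Aev M u d t ∩ Aev M u d t').indicator (fun _ => (1:ℝ)) := by
  funext ω
  by_cases h : M.X t u ω = M.X (t+d) u ω <;>
    by_cases h' : M.X t' u ω = M.X (t'+d) u ω <;>
      simp [NVM.zeta, Aev, Set.indicator_apply, h, h']

lemma integral_zeta [Countable V] (M : NVM G ε) (u : V) (d t : ℕ) :
    ∫ ω, M.zeta u d t ω ∂M.P = (M.P (Aev M u d t)).toReal := by
  simp only [zeta_eq_indicator M u d t]
  rw [integral_indicator_const (1:ℝ) (measurableSet_Aev M u d t), smul_eq_mul, mul_one]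
  rfl

lemma integral_zeta_mul [Countable V] (M : NVM G ε) (u : V) (d t t' : ℕ) :
    ∫ ω, M.zeta u d t ω * M.zeta u d t' ω ∂M.P
      = (M.P (Aev M u d t ∩ Aev M u d t')).toReal := by
  have h := zeta_mul_eq_indicator M u d t t'
  have h2 : ∫ ω, M.zeta u d t ω * M.zeta u d t' ω ∂M.P
      = ∫ ω, (Aev M u d t ∩ Aev M u d t').indicator (fun _ => (1:ℝ)) ω ∂M.P := by
    rw [← h]
  rw [h2, integral_indicator_const (1:ℝ)
    ((measurableSet_Aev M u d t).inter (measurableSet_Aev M u d t')), smul_eq_mul, mul_one]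
  rfl

lemma integrable_zeta [Countable V] (M : NVM G ε) (u : V) (d t : ℕ) :
    MeasureTheory.Integrable (M.zeta u d t) M.P := by
  have hPr := M.isProb
  rw [zeta_eq_indicator M u d t]
  exact (MeasureTheory.integrable_const (1:ℝ)).indicator (measurableSet_Aev M u d t)

lemma integrable_zeta_mul [Countable V] (M : NVM G ε) (u : V) (d t t' : ℕ) :
    MeasureTheory.Integrable (fun ω => M.zeta u d t ω * M.zeta u d t' ω) M.P := by
  have hPr := M.isProb
  rw [zeta_mul_eq_indicator M u d t t']
  exact (MeasureTheory.integrable_const (1:ℝ)).indicator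
    ((measurableSet_Aev M u d t).inter (measurableSet_Aev M u d t'))

lemma measurable_zeta [Countable V] (M : NVM G ε) (u : V) (d t : ℕ) :
    Measurable (M.zeta u d t) := by
  rw [zeta_eq_indicator M u d t]
  exact measurable_const.indicator (measurableSet_Aev M u d t)

lemma zeta_abs_le_one (M : NVM G ε) (u : V) (d t : ℕ) (ω : M.space) :
    |M.zeta u d t ω| ≤ 1 := by
  by_cases h : M.X t u ω = M.X (t+d) u ω <;> simp [NVM.zeta, h]

lemma zeta_nonneg (M : NVM G ε) (u : V) (d t : ℕ) (ω : M.space) :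
    0 ≤ M.zeta u d t ω := by
  by_cases h : M.X t u ω = M.X (t+d) u ω <;> simp [NVM.zeta, h]

end NVM

/-- Claim 2.9: the variance of a block of `ζ`'s changes by at most
`8 (s/ε) (1-ε)^t` under translation by `τ`. -/
theorem variance_translation_bound
    {V : Type} {G : SimpleGraph V} {ε : ℝ}
    (hε : ε ∈ Set.Ioo (0 : ℝ) 1)
    (hG : G.Connected) (hlf : ∀ v, (G.neighborSet v).Finite)
    (M : NVM G ε) (u : V) (d : ℕ) (hd : 0 < d)
    (t s τ : ℕ) (ht : 0 < t) (hs : 0 < s) (hτ : 0 < τ) :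
    |ProbabilityTheory.variance
        (fun ω => ∑ j ∈ Finset.Icc (t + 1) (t + s), M.zeta u d j ω) M.P -
      ProbabilityTheory.variance
        (fun ω => ∑ j ∈ Finset.Icc (t + τ + 1) (t + s + τ), M.zeta u d j ω) M.P| ≤
      8 * ((s : ℝ) / ε) * (1 - ε) ^ t := by
  obtain ⟨hε0, hε1⟩ := hε
  haveI : Countable V := NVM.countable_of_connected hG hlf
  haveI hPr := M.isProb
  have hr0 : (0:ℝ) ≤ 1 - ε := by linarith
  have hr1 : (1:ℝ) - ε < 1 := by linarith
  set r : ℝ := 1 - ε with hrdef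
  set I := Finset.Icc (t+1) (t+s) with hIdef
  set m : ℕ → ℕ → ℝ := fun c j => (M.P (NVM.Aev M u d (c+j))).toReal with hmdef
  set x : ℕ → ℕ → ℕ → ℝ :=
    fun c j j' => (M.P (NVM.Aev M u d (c+j) ∩ NVM.Aev M u d (c+j'))).toReal with hxdef
  -- variance formula
  have hvar : ∀ c, ProbabilityTheory.variance (fun ω => ∑ j ∈ I, M.zeta u d (c+j) ω) M.P
      = (∑ j ∈ I, ∑ j' ∈ I, x c j j') - (∑ j ∈ I, m c j)^2 := by
    intro c
    set f : M.space → ℝ := fun ω => ∑ j ∈ I, M.zeta u d (c+j) ω with hf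
    have hfm : Measurable f :=
      Finset.measurable_sum I fun j _ => NVM.measurable_zeta M u d (c+j)
    have hmem : MeasureTheory.MemLp f 2 M.P := by
      refine MeasureTheory.MemLp.of_bound hfm.aestronglyMeasurable (I.card : ℝ)
        (MeasureTheory.ae_of_all _ fun ω => ?_)
      calc ‖f ω‖ ≤ ∑ j ∈ I, ‖M.zeta u d (c+j) ω‖ := norm_sum_le _ _
        _ ≤ ∑ _j ∈ I, 1 := Finset.sum_le_sum fun j _ => by
            rw [Real.norm_eq_abs]; exact NVM.zeta_abs_le_one M u d (c+j) ω
        _ = I.card := by simp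
    rw [ProbabilityTheory.variance_eq_sub hmem]
    have h2 : ∫ ω, (f ^ 2) ω ∂M.P = ∑ j ∈ I, ∑ j' ∈ I, x c j j' := by
      have hsq : (f ^ 2 : M.space → ℝ)
          = fun ω => ∑ j ∈ I, ∑ j' ∈ I, M.zeta u d (c+j) ω * M.zeta u d (c+j') ω := by
        funext ω
        show (f ω) ^ 2 = _
        rw [sq, hf]
        exact Finset.sum_mul_sum I I _ _
      rw [hsq]
      rw [MeasureTheory.integral_finset_sum I (fun j _ =>
        MeasureTheory.integrable_finset_sum I (fun j' _ => NVM.integrable_zeta_mul M u d _ _))]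
      refine Finset.sum_congr rfl fun j _ => ?_
      rw [MeasureTheory.integral_finset_sum I (fun j' _ => NVM.integrable_zeta_mul M u d _ _)]
      exact Finset.sum_congr rfl fun j' _ => NVM.integral_zeta_mul M u d _ _
    have h1 : ∫ ω, f ω ∂M.P = ∑ j ∈ I, m c j := by
      rw [hf, MeasureTheory.integral_finset_sum I (fun j _ => NVM.integrable_zeta M u d _)]
      exact Finset.sum_congr rfl fun j _ => NVM.integral_zeta M u d _
    rw [h2, h1]
  have hfun0 : (fun ω => ∑ j ∈ Finset.Icc (t+1) (t+s), M.zeta u d j ω)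
      = (fun ω => ∑ j ∈ I, M.zeta u d (0+j) ω) := by
    funext ω; exact Finset.sum_congr rfl fun j _ => by rw [Nat.zero_add]
  have hfunτ : (fun ω => ∑ j ∈ Finset.Icc (t+τ+1) (t+s+τ), M.zeta u d j ω)
      = (fun ω => ∑ j ∈ I, M.zeta u d (τ+j) ω) := by
    funext ω
    rw [show t+τ+1 = t+1+τ from by omega, ← Finset.image_add_right_Icc (t+1) (t+s) τ,
      Finset.sum_image (fun a _ b _ h => by omega)]
    exact Finset.sum_congr rfl fun j _ => by rw [Nat.add_comm]
  rw [hfun0, hfunτ, hvar 0, hvar τ]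
  -- per-pair bounds
  have hmle : ∀ c j, 0 ≤ m c j ∧ m c j ≤ 1 := by
    intro c j
    refine ⟨ENNReal.toReal_nonneg, ?_⟩
    have h := ENNReal.toReal_mono (a := M.P (NVM.Aev M u d (c+j))) (b := 1) (by simp)
      MeasureTheory.prob_le_one
    simpa using h
  have hdm : ∀ j, |m τ j - m 0 j| ≤ 2 * r^j := fun j =>
    NVM.shift_pair_bound M hlf (le_of_lt hε0) (le_of_lt hε1) u d j τ
  have hdx : ∀ j j', |x τ j j' - x 0 j j'| ≤ 2 * (r^j + r^(j')) := fun j j' =>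
    NVM.shift_quad_bound M hlf (le_of_lt hε0) (le_of_lt hε1) u d j j' τ
  have hdmm : ∀ j j', |m τ j * m τ j' - m 0 j * m 0 j'| ≤ 2*r^j + 2*r^(j') := by
    intro j j'
    obtain ⟨h0j, h1j⟩ := hmle τ j
    obtain ⟨h0j', h1j'⟩ := hmle τ j'
    obtain ⟨g0j, g1j⟩ := hmle 0 j
    obtain ⟨g0j', g1j'⟩ := hmle 0 j'
    have hsplit : m τ j * m τ j' - m 0 j * m 0 j'
        = (m τ j - m 0 j) * m τ j' + m 0 j * (m τ j' - m 0 j') := by ring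
    rw [hsplit]
    calc |(m τ j - m 0 j) * m τ j' + m 0 j * (m τ j' - m 0 j')|
        ≤ |(m τ j - m 0 j) * m τ j'| + |m 0 j * (m τ j' - m 0 j')| := abs_add_le _ _
      _ ≤ |m τ j - m 0 j| * 1 + 1 * |m τ j' - m 0 j'| := by
          rw [abs_mul, abs_mul]
          gcongr
          · rw [abs_of_nonneg h0j']; exact h1j'
          · rw [abs_of_nonneg g0j]; exact g1j
      _ ≤ (2*r^j) * 1 + 1 * (2*r^(j')) := by
          gcongr
          · exact hdm j
          · exact hdm j'
      _ = 2*r^j + 2*r^(j') := by ring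
  have hpair : ∀ j j', |(x 0 j j' - m 0 j * m 0 j') - (x τ j j' - m τ j * m τ j')|
      ≤ 4 * (r^j + r^(j')) := by
    intro j j'
    have h1 := hdx j j'
    have h2 := hdmm j j'
    have habs1 : |x 0 j j' - x τ j j'| = |x τ j j' - x 0 j j'| := abs_sub_comm _ _
    have habs2 : |(x 0 j j' - m 0 j * m 0 j') - (x τ j j' - m τ j * m τ j')|
        ≤ |x 0 j j' - x τ j j'| + |m τ j * m τ j' - m 0 j * m 0 j'| := by
      have : (x 0 j j' - m 0 j * m 0 j') - (x τ j j' - m τ j * m τ j')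
          = (x 0 j j' - x τ j j') + (m τ j * m τ j' - m 0 j * m 0 j') := by ring
      rw [this]
      exact abs_add_le _ _
    rw [habs1] at habs2
    calc |(x 0 j j' - m 0 j * m 0 j') - (x τ j j' - m τ j * m τ j')|
        ≤ 2 * (r^j + r^(j')) + (2*r^j + 2*r^(j')) := le_trans habs2 (add_le_add h1 h2)
      _ = 4 * (r^j + r^(j')) := by ring
  -- sum manipulation
  have hsub2 : ∀ (F G : ℕ → ℕ → ℝ),
      (∑ j ∈ I, ∑ j' ∈ I, F j j') - (∑ j ∈ I, ∑ j' ∈ I, G j j')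
        = ∑ j ∈ I, ∑ j' ∈ I, (F j j' - G j j') := by
    intro F G
    rw [← Finset.sum_sub_distrib]
    exact Finset.sum_congr rfl fun j _ => by rw [← Finset.sum_sub_distrib]
  have hsq : ∀ c, (∑ j ∈ I, m c j)^2 = ∑ j ∈ I, ∑ j' ∈ I, m c j * m c j' := by
    intro c; rw [sq]; exact Finset.sum_mul_sum I I _ _
  have hmain : |(∑ j ∈ I, ∑ j' ∈ I, x 0 j j') - (∑ j ∈ I, m 0 j)^2
      - ((∑ j ∈ I, ∑ j' ∈ I, x τ j j') - (∑ j ∈ I, m τ j)^2)|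
      ≤ ∑ j ∈ I, ∑ j' ∈ I, 4 * (r^j + r^(j')) := by
    rw [hsq, hsq, hsub2, hsub2, hsub2]
    calc |∑ j ∈ I, ∑ j' ∈ I, ((x 0 j j' - m 0 j * m 0 j') - (x τ j j' - m τ j * m τ j'))|
        ≤ ∑ j ∈ I, |∑ j' ∈ I, ((x 0 j j' - m 0 j * m 0 j') - (x τ j j' - m τ j * m τ j'))| :=
          Finset.abs_sum_le_sum_abs _ _
      _ ≤ ∑ j ∈ I, ∑ j' ∈ I, |(x 0 j j' - m 0 j * m 0 j') - (x τ j j' - m τ j * m τ j')| :=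
          Finset.sum_le_sum fun j _ => Finset.abs_sum_le_sum_abs _ _
      _ ≤ ∑ j ∈ I, ∑ j' ∈ I, 4 * (r^j + r^(j')) :=
          Finset.sum_le_sum fun j _ => Finset.sum_le_sum fun j' _ => hpair j j'
  refine le_trans hmain ?_
  -- numeric endgame
  have hcard : I.card = s := by rw [hIdef, Nat.card_Icc]; omega
  have hT : ∑ j ∈ I, r^j ≤ r^(t+1) * (1/ε) := by
    have hIimg : I = (Finset.range s).image (fun i => i + (t+1)) := by
      ext j
      simp only [hIdef, Finset.mem_Icc, Finset.mem_image, Finset.mem_range]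
      constructor
      · intro h; exact ⟨j - (t+1), by omega, by omega⟩
      · rintro ⟨i, hi, rfl⟩; omega
    rw [hIimg, Finset.sum_image (fun a _ b _ h => by omega)]
    have hpows : ∀ i ∈ Finset.range s, r^(i + (t+1)) = r^i * r^(t+1) :=
      fun i _ => pow_add r i (t+1)
    rw [Finset.sum_congr rfl hpows, ← Finset.sum_mul]
    have hεne : ε ≠ 0 := ne_of_gt hε0
    have hgeom : ∑ i ∈ Finset.range s, r^i ≤ 1/ε := by
      rw [geom_sum_eq (by intro h; rw [hrdef] at h; linarith) s]
      have hne : r - 1 = -ε := by rw [hrdef]; ring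
      rw [hne]
      have heq : (r^s - 1)/(-ε) = (1 - r^s)/ε := by
        rw [div_neg, ← neg_div, neg_sub]
      rw [heq]
      have hpow : (0:ℝ) ≤ r^s := pow_nonneg hr0 s
      rw [div_le_div_iff₀ hε0 hε0]
      nlinarith
    calc (∑ i ∈ Finset.range s, r^i) * r^(t+1) ≤ (1/ε) * r^(t+1) := by
          have : (0:ℝ) ≤ r^(t+1) := pow_nonneg hr0 _
          exact mul_le_mul_of_nonneg_right hgeom this
      _ = r^(t+1) * (1/ε) := mul_comm _ _
  have hsum2 : ∑ j ∈ I, ∑ j' ∈ I, 4 * (r^j + r^(j'))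
      = 8 * (s:ℝ) * (∑ j ∈ I, r^j) := by
    have hinner : ∀ j ∈ I, ∑ j' ∈ I, 4 * (r^j + r^(j'))
        = 4 * (s:ℝ) * r^j + 4 * ∑ j' ∈ I, r^(j') := by
      intro j _
      have h1 : ∀ j' ∈ I, 4 * (r^j + r^(j')) = 4*r^j + 4*r^(j') := fun j' _ => by ring
      rw [Finset.sum_congr rfl h1, Finset.sum_add_distrib, Finset.sum_const, ← Finset.mul_sum,
        nsmul_eq_mul, hcard]
      ring
    rw [Finset.sum_congr rfl hinner, Finset.sum_add_distrib, Finset.sum_const, ← Finset.mul_sum,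
      nsmul_eq_mul, hcard]
    ring
  rw [hsum2]
  have hrt : r^(t+1) ≤ r^t :=
    pow_le_pow_of_le_one hr0 (by rw [hrdef]; linarith) (by omega)
  have hs8 : (0:ℝ) ≤ 8 * (s:ℝ) := by positivity
  have hsε : (0:ℝ) ≤ 8 * ((s:ℝ)/ε) :=
    mul_nonneg (by norm_num) (div_nonneg (Nat.cast_nonneg s) hε0.le)
  calc 8 * (s:ℝ) * (∑ j ∈ I, r^j) ≤ 8 * (s:ℝ) * (r^(t+1) * (1/ε)) :=
        mul_le_mul_of_nonneg_left hT hs8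
    _ = 8*((s:ℝ)/ε)*r^(t+1) := by ring
    _ ≤ 8 * ((s : ℝ) / ε) * r^t := mul_le_mul_of_nonneg_left hrt hsε

end NVMPaper
end
end

section
/- Fix ε ∈ (0,1) and define f : ℝ → ℝ by f(x) = 1/x + (1−ε)²(x−1)² / (x(x² − (1−ε)²(x² − x + 1))). Then for every real x ≥ 5 the denominator x(x² − (1−ε)²(x² − x + 1)) is positive and f′(x) < 0; consequently f is strictly decreasing on [5, ∞). -/
/-! Writing `c = (1 - ε)²`, the two fractions combine for `x > 1` into
`f(x) = (x - c) / g(x)` with `g(x) = (1 - c)x² + cx - c > 0`. The quotient rule gives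
`f'(x) = -(1 - c)(x² - 2cx + c) / g(x)²`, and `x² - 2cx + c > (x - 1)² ≥ 0` because `c < 1`. -/

open Topology

noncomputable section

namespace NVMPaper

def f (c x : ℝ) : ℝ := 1 / x + c * (x - 1) ^ 2 / (x * (x ^ 2 - c * (x ^ 2 - x + 1)))

def g (c x : ℝ) : ℝ := (1 - c) * x ^ 2 + c * x - c

section

variable {c x : ℝ}

lemma g_eq (c x : ℝ) : g c x = x ^ 2 - c * (x ^ 2 - x + 1) := by
  unfold g; ring

lemma g_pos (hc0 : 0 ≤ c) (hc1 : c < 1) (hx : 1 < x) : 0 < g c x := by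
  unfold g
  nlinarith [mul_pos (sub_pos.2 hc1) (by positivity : (0:ℝ) < x ^ 2), mul_nonneg hc0 (sub_nonneg.2 hx.le)]

lemma f_eq_div (hx : x ≠ 0) (hg : g c x ≠ 0) : f c x = (x - c) / g c x := by
  rw [f, ← g_eq, div_add_div _ _ hx (mul_ne_zero hx hg),
    div_eq_div_iff (mul_ne_zero hx (mul_ne_zero hx hg)) hg]
  unfold g; ring

lemma hasDerivAt_g (c x : ℝ) : HasDerivAt (g c) (2 * (1 - c) * x + c) x := by
  have := (((hasDerivAt_pow 2 x).const_mul (1 - c)).add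
    ((hasDerivAt_id x).const_mul c)).sub_const c
  exact this.congr_deriv (by norm_num; ring)

lemma hasDerivAt_f (hc0 : 0 ≤ c) (hc1 : c < 1) (hx : 1 < x) :
    HasDerivAt (f c) (-(1 - c) * (x ^ 2 - 2 * c * x + c) / g c x ^ 2) x := by
  have hquot := ((hasDerivAt_id x).sub_const c).div (hasDerivAt_g c x) (g_pos hc0 hc1 hx).ne'
  have heq : f c =ᶠ[𝓝 x] fun y => (y - c) / g c y := by
    filter_upwards [Ioi_mem_nhds hx] with y hy
    exact f_eq_div (by linarith [Set.mem_Ioi.1 hy]) (g_pos hc0 hc1 hy).ne'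
  refine (hquot.congr_of_eventuallyEq heq).congr_deriv ?_
  congr 1
  unfold g id; ring

lemma deriv_f_neg (hc0 : 0 ≤ c) (hc1 : c < 1) (hx : 1 < x) : deriv (f c) x < 0 := by
  rw [(hasDerivAt_f hc0 hc1 hx).deriv]
  have hquad : 0 < x ^ 2 - 2 * c * x + c := by nlinarith
  exact div_neg_of_neg_of_pos (by nlinarith) (pow_pos (g_pos hc0 hc1 hx) 2)

lemma f_strictAntiOn (hc0 : 0 ≤ c) (hc1 : c < 1) : StrictAntiOn (f c) (Set.Ioi 1) := by
  refine strictAntiOn_of_deriv_neg (convex_Ioi 1) (fun y hy => ?_) (fun y hy => ?_)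
  · exact (hasDerivAt_f hc0 hc1 hy).continuousAt.continuousWithinAt
  · rw [interior_Ioi] at hy
    exact deriv_f_neg hc0 hc1 hy

end

/-- Remark in Section 4.1: for fixed `ε ∈ (0,1)`, the function
`f(x) = 1/x + (1−ε)²(x−1)² / (x(x² − (1−ε)²(x² − x + 1)))` has positive denominator
and negative derivative for all `x ≥ 5`; consequently `f` is strictly decreasing on
`[5, ∞)`. -/
theorem f_strictAnti (ε : ℝ) (hε : ε ∈ Set.Ioo (0 : ℝ) 1) :
    (∀ x : ℝ, 5 ≤ x →
      0 < x * (x ^ 2 - (1 - ε) ^ 2 * (x ^ 2 - x + 1)) ∧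
        deriv (fun x : ℝ =>
          1 / x + (1 - ε) ^ 2 * (x - 1) ^ 2 /
            (x * (x ^ 2 - (1 - ε) ^ 2 * (x ^ 2 - x + 1)))) x < 0) ∧
    StrictAntiOn (fun x : ℝ =>
        1 / x + (1 - ε) ^ 2 * (x - 1) ^ 2 /
          (x * (x ^ 2 - (1 - ε) ^ 2 * (x ^ 2 - x + 1)))) (Set.Ici 5) := by
  have hc0 : 0 ≤ (1 - ε) ^ 2 := sq_nonneg _
  have hc1 : (1 - ε) ^ 2 < 1 := by nlinarith [hε.1, hε.2]
  refine ⟨fun x hx => ⟨?_, deriv_f_neg hc0 hc1 (by linarith)⟩,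
    (f_strictAntiOn hc0 hc1).mono (Set.Ici_subset_Ioi.2 (by norm_num))⟩
  rw [← g_eq]
  exact mul_pos (by linarith) (g_pos hc0 hc1 (by linarith))

end NVMPaper
end
end
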